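/- Let T be an HC tree of order n that is locally optimal with respect to the interchange operation for a similarity function w : {1,…,n}×{1,…,n} → ℝ≥0, and suppose the root of T has child subtrees with leaf sets A and B. Writing s(X) = Σ_{i<j, i,j∈X} w(i,j), one has 2·|B|·s(A) ≥ (|A|−1)·w(A,B) and 2·|A|·s(B) ≥ (|B|−1)·w(A,B); consequently 2·(|B|·s(A) + |A|·s(B)) + 2·w(A,B) ≥ (|A|+|B|)·w(A,B). -/

import Mathlib

/-- A (rooted, full) binary tree with leaves labeled by elements of `α`. -/
inductive HCTree (α : Type) : Type
  | leaf : α → HCTree α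
  | node : HCTree α → HCTree α → HCTree α
  deriving DecidableEq

namespace HCTree

variable {α : Type} [DecidableEq α]

/-- The set of leaf labels of a tree. -/
def leaves : HCTree α → Finset α
  | leaf a => {a}
  | node l r => leaves l ∪ leaves r

/-- The tree is a valid HC tree: all leaf labels are pairwise distinct. -/
def Proper : HCTree α → Prop
  | leaf _ => True
  | node l r => Proper l ∧ Proper r ∧ Disjoint (leaves l) (leaves r)

/-- The number of leaves of the subtree rooted at the lowest common ancestor
of the leaves `i` and `j` (i.e. `|T_{i,j}|`). -/
def lcaSize : HCTree α → α → α → ℕ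
  | leaf _, _, _ => 1
  | node l r, i, j =>
      if i ∈ leaves l ∧ j ∈ leaves l then lcaSize l i j
      else if i ∈ leaves r ∧ j ∈ leaves r then lcaSize r i j
      else (leaves l ∪ leaves r).card

/-- `Σ_{i<j, i,j ∈ L} w i j`. -/
noncomputable def pairsSum [LinearOrder α] (w : α → α → ℝ) (L : Finset α) : ℝ :=
  ∑ i ∈ L, ∑ j ∈ L, if i < j then w i j else 0

/-- Moseley–Wang revenue of `T` with respect to its own leaf set:
`rev(T) = Σ_{i<j} w(i,j) (|L| - |T_{i,j}|)`. -/
noncomputable def rev [LinearOrder α] (w : α → α → ℝ) (T : HCTree α) : ℝ :=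
  ∑ i ∈ T.leaves, ∑ j ∈ T.leaves,
    if i < j then w i j * ((T.leaves.card : ℝ) - (T.lcaSize i j : ℝ)) else 0

/-- Dasgupta cost: `cost(T) = Σ_{i<j} w(i,j) |T_{i,j}|`. -/
noncomputable def cost [LinearOrder α] (w : α → α → ℝ) (T : HCTree α) : ℝ :=
  ∑ i ∈ T.leaves, ∑ j ∈ T.leaves,
    if i < j then w i j * (T.lcaSize i j : ℝ) else 0

/-- `w(A,B) = Σ_{i∈A, j∈B} w(i,j)`. -/
noncomputable def wSet (w : α → α → ℝ) (A B : Finset α) : ℝ := ∑ i ∈ A, ∑ j ∈ B, w i j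

/-- One-hole contexts for `HCTree`. -/
inductive Ctx (α : Type) : Type
  | hole : Ctx α
  | nodeL : Ctx α → HCTree α → Ctx α
  | nodeR : HCTree α → Ctx α → Ctx α

/-- Filling the hole of a context with a tree. -/
def Ctx.fill {α : Type} : Ctx α → HCTree α → HCTree α
  | Ctx.hole, T => T
  | Ctx.nodeL K r, T => node (Ctx.fill K T) r
  | Ctx.nodeR l K, T => node l (Ctx.fill K T)

/-- Equality of HC trees as *unordered* trees (children of a node are unordered). -/
inductive TEq : HCTree α → HCTree α → Prop
  | leaf (a : α) : TEq (leaf a) (leaf a)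
  | node {l r l' r' : HCTree α} : TEq l l' → TEq r r' → TEq (node l r) (node l' r')
  | swap {l r l' r' : HCTree α} : TEq l r' → TEq r l' → TEq (node l r) (node l' r')

/-- `T'` is obtained from `T` by a single interchange operation: at an edge `(x,y)`
where `x` is internal with parent `y`, the subtrees rooted at the children of `x`
have leaf sets `A` and `B`, and the other child of `y` has leaf set `C`; the
operation swaps the `B`-subtree with the `C`-subtree, or the `A`-subtree with
the `C`-subtree. -/
def Interchange {α : Type} (T T' : HCTree α) : Prop :=
  ∃ (K : Ctx α) (A B C : HCTree α),
    T = K.fill (node (node A B) C) ∧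
    (T' = K.fill (node (node A C) B) ∨ T' = K.fill (node (node C B) A))

/-- `T` is locally optimal: no interchange, performed on any presentation `S` of
`T` as an unordered tree, strictly increases the revenue. -/
def LocalOpt [LinearOrder α] (w : α → α → ℝ) (T : HCTree α) : Prop :=
  ∀ S S' : HCTree α, TEq T S → Interchange S S' → rev w S' ≤ rev w T

/-- One step of local search: an interchange, up to unordered-tree equality. -/
def IStep (T T' : HCTree α) : Prop :=
  ∃ S S' : HCTree α, TEq T S ∧ Interchange S S' ∧ TEq S' T'

/-- The interchange distance: minimum number of interchange operations needed to
convert `T₁` into `T₂` (as unordered trees). -/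
noncomputable def idist (T₁ T₂ : HCTree α) : ℕ :=
  sInf {k : ℕ | ∃ f : ℕ → HCTree α, f 0 = T₁ ∧ TEq (f k) T₂ ∧
    ∀ i < k, IStep (f i) (f (i + 1))}

/-- The total cost of all merges of `T`: the sum over internal nodes, with
children leaf sets `A`, `B`, of `(|A|+|B|)·w(A,B)`. -/
noncomputable def mergeCostSum (w : α → α → ℝ) : HCTree α → ℝ
  | leaf _ => 0
  | node l r => mergeCostSum w l + mergeCostSum w r
      + ((l.leaves.card : ℝ) + (r.leaves.card : ℝ)) * wSet w l.leaves r.leaves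

/-- The total revenue of all merges of `T` in a tree of order `n`: the sum over
internal nodes, with children leaf sets `A`, `B`, of `(n-|A|-|B|)·w(A,B)`. -/
noncomputable def mergeRevSum (w : α → α → ℝ) (n : ℕ) : HCTree α → ℝ
  | leaf _ => 0
  | node l r => mergeRevSum w n l + mergeRevSum w n r
      + ((n : ℝ) - (l.leaves.card : ℝ) - (r.leaves.card : ℝ)) * wSet w l.leaves r.leaves

/-- Average similarity between two clusters. -/
noncomputable def sim (w : α → α → ℝ) (A B : Finset α) : ℝ :=
  wSet w A B / ((A.card : ℝ) * (B.card : ℝ))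

/-- The forests (partial hierarchies) reachable by the average link algorithm:
start from singletons, and repeatedly merge two clusters of maximal average
similarity. -/
inductive AvgLinkForest [Fintype α] (w : α → α → ℝ) : Finset (HCTree α) → Prop
  | init : AvgLinkForest w (Finset.univ.image (leaf : α → HCTree α))
  | merge {F : Finset (HCTree α)} {A B : HCTree α} :
      AvgLinkForest w F → A ∈ F → B ∈ F → A ≠ B →
      (∀ X ∈ F, ∀ Y ∈ F, X ≠ Y → sim w X.leaves Y.leaves ≤ sim w A.leaves B.leaves) →
      AvgLinkForest w (insert (node A B) ((F.erase A).erase B))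

/-- `T` is produced by some execution of the average link algorithm. -/
def AvgLinkTree [Fintype α] (w : α → α → ℝ) (T : HCTree α) : Prop :=
  AvgLinkForest w {T}

/-! ### Auxiliary lemmas for `locally_optimal_root_ineq` -/

theorem teq_refl : ∀ T : HCTree α, TEq T T
  | leaf a => TEq.leaf a
  | node l r => TEq.node (teq_refl l) (teq_refl r)

theorem teq_leaves {S T : HCTree α} (h : TEq S T) : S.leaves = T.leaves := by
  induction h with
  | leaf a => rfl
  | node _ _ ihl ihr => simp [leaves, ihl, ihr]
  | swap _ _ iha ihb => simp [leaves, iha, ihb, Finset.union_comm]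

theorem teq_trans {a b c : HCTree α} (h1 : TEq a b) (h2 : TEq b c) : TEq a c := by
  induction h1 generalizing c with
  | leaf a => exact h2
  | node h1l h1r ihl ihr =>
    cases h2 with
    | node h2l h2r => exact TEq.node (ihl h2l) (ihr h2r)
    | swap h2a h2b => exact TEq.swap (ihl h2a) (ihr h2b)
  | swap h1a h1b iha ihb =>
    cases h2 with
    | node h2l h2r => exact TEq.swap (iha h2r) (ihb h2l)
    | swap h2a h2b => exact TEq.node (iha h2b) (ihb h2a)

theorem teq_proper {S T : HCTree α} (h : TEq S T) : S.Proper → T.Proper := by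
  induction h with
  | leaf a => exact id
  | node hl hr ihl ihr =>
    rintro ⟨p1, p2, d⟩
    exact ⟨ihl p1, ihr p2, by rw [← teq_leaves hl, ← teq_leaves hr]; exact d⟩
  | swap ha hb iha ihb =>
    rintro ⟨p1, p2, d⟩
    exact ⟨ihb p2, iha p1, by rw [← teq_leaves hb, ← teq_leaves ha]; exact d.symm⟩

theorem teq_fill {S S' : HCTree α} (h : TEq S S') :
    ∀ K : Ctx α, TEq (K.fill S) (K.fill S')
  | Ctx.hole => h
  | Ctx.nodeL K r => TEq.node (teq_fill h K) (teq_refl r)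
  | Ctx.nodeR l K => TEq.node (teq_refl l) (teq_fill h K)

/-- Composition of contexts. -/
def Ctx.comp {β : Type} : Ctx β → Ctx β → Ctx β
  | Ctx.hole, K' => K'
  | Ctx.nodeL K r, K' => Ctx.nodeL (Ctx.comp K K') r
  | Ctx.nodeR l K, K' => Ctx.nodeR l (Ctx.comp K K')

theorem fill_comp {β : Type} : ∀ (K K' : Ctx β) (S : HCTree β),
    (K.comp K').fill S = K.fill (K'.fill S)
  | Ctx.hole, _, _ => rfl
  | Ctx.nodeL K r, K', S => by simp [Ctx.comp, Ctx.fill, fill_comp K K' S]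
  | Ctx.nodeR l K, K', S => by simp [Ctx.comp, Ctx.fill, fill_comp K K' S]

theorem leaves_fill_congr {S S' : HCTree α} (h : S.leaves = S'.leaves) :
    ∀ K : Ctx α, (K.fill S).leaves = (K.fill S').leaves
  | Ctx.hole => h
  | Ctx.nodeL K r => by simp [Ctx.fill, leaves, leaves_fill_congr h K]
  | Ctx.nodeR l K => by simp [Ctx.fill, leaves, leaves_fill_congr h K]

theorem proper_fill_inner {S : HCTree α} : ∀ K : Ctx α, (K.fill S).Proper → S.Proper
  | Ctx.hole, h => h
  | Ctx.nodeL K r, h => proper_fill_inner K h.1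
  | Ctx.nodeR l K, h => proper_fill_inner K h.2.1

theorem proper_fill_congr {S S' : HCTree α} (h : S.leaves = S'.leaves) (hP' : S'.Proper) :
    ∀ K : Ctx α, (K.fill S).Proper → (K.fill S').Proper
  | Ctx.hole, _ => hP'
  | Ctx.nodeL K r, hp => ⟨proper_fill_congr h hP' K hp.1, hp.2.1,
      by rw [← leaves_fill_congr h K]; exact hp.2.2⟩
  | Ctx.nodeR l K, hp => ⟨hp.1, proper_fill_congr h hP' K hp.2.1,
      by rw [← leaves_fill_congr h K]; exact hp.2.2⟩

theorem leaves_nonempty : ∀ T : HCTree α, T.leaves.Nonempty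
  | leaf a => ⟨a, Finset.mem_singleton_self a⟩
  | node l r => by
      simpa [leaves] using (leaves_nonempty l).mono Finset.subset_union_left

theorem wSet_comm (w : α → α → ℝ) (hsym : ∀ i j, w i j = w j i) (A B : Finset α) :
    wSet w A B = wSet w B A := by
  rw [wSet, wSet, Finset.sum_comm]
  exact Finset.sum_congr rfl fun x _ => Finset.sum_congr rfl fun y _ => hsym y x

theorem wSet_union_left (w : α → α → ℝ) {A B : Finset α} (hd : Disjoint A B)
    (C : Finset α) : wSet w (A ∪ B) C = wSet w A C + wSet w B C :=
  Finset.sum_union hd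

theorem cross_sum [LinearOrder α] (v : α → α → ℝ) (hv : ∀ i j, v i j = v j i)
    {A B : Finset α} (hd : Disjoint A B) :
    ((∑ i ∈ A, ∑ j ∈ B, if i < j then v i j else 0)
      + ∑ i ∈ B, ∑ j ∈ A, if i < j then v i j else 0)
    = ∑ i ∈ A, ∑ j ∈ B, v i j := by
  rw [show (∑ i ∈ B, ∑ j ∈ A, if i < j then v i j else 0)
      = ∑ i ∈ A, ∑ j ∈ B, if j < i then v j i else 0 from Finset.sum_comm,
    ← Finset.sum_add_distrib]
  refine Finset.sum_congr rfl fun i hi => ?_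
  rw [← Finset.sum_add_distrib]
  refine Finset.sum_congr rfl fun j hj => ?_
  have hij : i ≠ j := fun hne => Finset.disjoint_left.mp hd hi (hne ▸ hj)
  rcases hij.lt_or_gt with h | h
  · rw [if_pos h, if_neg (asymm h), add_zero]
  · rw [if_neg (asymm h), if_pos h, hv j i, zero_add]

theorem sum_mul_right (w : α → α → ℝ) (c : ℝ) (A B : Finset α) :
    (∑ i ∈ A, ∑ j ∈ B, w i j * c) = wSet w A B * c := by
  rw [wSet, Finset.sum_mul]
  exact Finset.sum_congr rfl fun i _ => (Finset.sum_mul _ _ _).symm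

theorem pairsSum_union [LinearOrder α] (w : α → α → ℝ) (hsym : ∀ i j, w i j = w j i)
    {A B : Finset α} (hd : Disjoint A B) :
    pairsSum w (A ∪ B) = pairsSum w A + pairsSum w B + wSet w A B := by
  simp only [pairsSum, Finset.sum_union hd, Finset.sum_add_distrib, wSet]
  linarith [cross_sum w hsym hd]

theorem sum_eq_mRS [LinearOrder α] (w : α → α → ℝ) (hsym : ∀ i j, w i j = w j i) :
    ∀ T : HCTree α, T.Proper → ∀ n : ℕ,
      (∑ i ∈ T.leaves, ∑ j ∈ T.leaves,
        if i < j then w i j * ((n : ℝ) - (T.lcaSize i j : ℝ)) else 0)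
      = mergeRevSum w n T := by
  intro T
  induction T with
  | leaf a => intro _ n; simp [leaves, lcaSize, mergeRevSum]
  | node l r ihl ihr =>
    rintro ⟨hPl, hPr, hd⟩ n
    have hLL : (∑ i ∈ l.leaves, ∑ j ∈ l.leaves,
        if i < j then w i j * ((n : ℝ) - ((node l r).lcaSize i j : ℝ)) else 0)
        = mergeRevSum w n l := by
      rw [← ihl hPl n]
      refine Finset.sum_congr rfl fun i hi => Finset.sum_congr rfl fun j hj => ?_
      simp [lcaSize, hi, hj]
    have hRR : (∑ i ∈ r.leaves, ∑ j ∈ r.leaves,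
        if i < j then w i j * ((n : ℝ) - ((node l r).lcaSize i j : ℝ)) else 0)
        = mergeRevSum w n r := by
      rw [← ihr hPr n]
      refine Finset.sum_congr rfl fun i hi => Finset.sum_congr rfl fun j hj => ?_
      have hi' : i ∉ l.leaves := Finset.disjoint_right.mp hd hi
      simp [lcaSize, hi', hi, hj]
    have hLRv : ∀ i ∈ l.leaves, ∀ j ∈ r.leaves,
        ((n : ℝ) - ((node l r).lcaSize i j : ℝ))
        = (n : ℝ) - (l.leaves.card : ℝ) - (r.leaves.card : ℝ) := by
      intro i hi j hj
      have h1 : i ∉ r.leaves := Finset.disjoint_left.mp hd hi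
      have h2 : j ∉ l.leaves := Finset.disjoint_right.mp hd hj
      have hval : (node l r).lcaSize i j = (l.leaves ∪ r.leaves).card := by
        simp [lcaSize, h1, h2]
      rw [hval, Finset.card_union_of_disjoint hd]
      push_cast
      ring
    have hRLv : ∀ i ∈ r.leaves, ∀ j ∈ l.leaves,
        ((n : ℝ) - ((node l r).lcaSize i j : ℝ))
        = (n : ℝ) - (l.leaves.card : ℝ) - (r.leaves.card : ℝ) := by
      intro i hi j hj
      have h1 : i ∉ l.leaves := Finset.disjoint_right.mp hd hi
      have h2 : j ∉ r.leaves := Finset.disjoint_left.mp hd hj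
      have hval : (node l r).lcaSize i j = (l.leaves ∪ r.leaves).card := by
        simp [lcaSize, h1, h2]
      rw [hval, Finset.card_union_of_disjoint hd]
      push_cast
      ring
    set c : ℝ := (n : ℝ) - (l.leaves.card : ℝ) - (r.leaves.card : ℝ) with hc
    have e1 : (∑ i ∈ l.leaves, ∑ j ∈ r.leaves,
        if i < j then w i j * ((n : ℝ) - ((node l r).lcaSize i j : ℝ)) else 0)
        = ∑ i ∈ l.leaves, ∑ j ∈ r.leaves, if i < j then w i j * c else 0 :=
      Finset.sum_congr rfl fun i hi => Finset.sum_congr rfl fun j hj => by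
        rw [hLRv i hi j hj]
    have e2 : (∑ i ∈ r.leaves, ∑ j ∈ l.leaves,
        if i < j then w i j * ((n : ℝ) - ((node l r).lcaSize i j : ℝ)) else 0)
        = ∑ i ∈ r.leaves, ∑ j ∈ l.leaves, if i < j then w i j * c else 0 :=
      Finset.sum_congr rfl fun i hi => Finset.sum_congr rfl fun j hj => by
        rw [hRLv i hi j hj]
    have hcross : (∑ i ∈ l.leaves, ∑ j ∈ r.leaves,
          if i < j then w i j * ((n : ℝ) - ((node l r).lcaSize i j : ℝ)) else 0)
        + (∑ i ∈ r.leaves, ∑ j ∈ l.leaves,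
          if i < j then w i j * ((n : ℝ) - ((node l r).lcaSize i j : ℝ)) else 0)
        = wSet w l.leaves r.leaves * c := by
      rw [e1, e2, cross_sum (fun i j => w i j * c) (fun i j => by show w i j * c = w j i * c; rw [hsym i j]) hd,
        sum_mul_right]
    simp only [leaves, Finset.sum_union hd, Finset.sum_add_distrib, mergeRevSum]
    rw [← hc]
    linarith [hLL, hRR, hcross]

theorem rev_eq_mRS [LinearOrder α] (w : α → α → ℝ) (hsym : ∀ i j, w i j = w j i)
    (T : HCTree α) (hP : T.Proper) :
    rev w T = mergeRevSum w T.leaves.card T := by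
  rw [rev]
  exact sum_eq_mRS w hsym T hP _

theorem mRS_teq (w : α → α → ℝ) (hsym : ∀ i j, w i j = w j i) (n : ℕ)
    {S T : HCTree α} (h : TEq S T) :
    mergeRevSum w n S = mergeRevSum w n T := by
  induction h with
  | leaf a => rfl
  | node hl hr ihl ihr =>
    simp only [mergeRevSum]
    rw [ihl, ihr, teq_leaves hl, teq_leaves hr]
  | swap ha hb iha ihb =>
    simp only [mergeRevSum]
    rw [iha, ihb, teq_leaves ha, teq_leaves hb, wSet_comm w hsym]
    ring

theorem mRS_fill_swap (w : α → α → ℝ) (n : ℕ) {S1 S2 : HCTree α}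
    (h : S1.leaves = S2.leaves) :
    ∀ K : Ctx α, mergeRevSum w n (K.fill S1) + mergeRevSum w n S2
      = mergeRevSum w n (K.fill S2) + mergeRevSum w n S1
  | Ctx.hole => add_comm _ _
  | Ctx.nodeL K r => by
      have ih := mRS_fill_swap w n h K
      simp only [Ctx.fill, mergeRevSum]
      rw [leaves_fill_congr h K]
      linarith
  | Ctx.nodeR l K => by
      have ih := mRS_fill_swap w n h K
      simp only [Ctx.fill, mergeRevSum]
      rw [leaves_fill_congr h K]
      linarith

theorem interchange_ineq [LinearOrder α] (w : α → α → ℝ) (hsym : ∀ i j, w i j = w j i)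
    (T : HCTree α) (hT : T.Proper) (hopt : LocalOpt w T)
    (K : Ctx α) (X Y Z : HCTree α)
    (h : TEq T (K.fill (node (node X Y) Z))) :
    (Y.leaves.card : ℝ) * wSet w X.leaves Z.leaves
        ≤ (Z.leaves.card : ℝ) * wSet w X.leaves Y.leaves ∧
    (X.leaves.card : ℝ) * wSet w Y.leaves Z.leaves
        ≤ (Z.leaves.card : ℝ) * wSet w X.leaves Y.leaves := by
  set S0 : HCTree α := node (node X Y) Z with hS0
  set V1 : HCTree α := node (node X Z) Y with hV1
  set V2 : HCTree α := node (node Z Y) X with hV2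
  have hPS : (K.fill S0).Proper := teq_proper h hT
  have hPin : S0.Proper := proper_fill_inner K hPS
  obtain ⟨⟨PX, PY, dXY⟩, PZ, dUZ⟩ := hPin
  have dXZ : Disjoint X.leaves Z.leaves :=
    Finset.disjoint_of_subset_left Finset.subset_union_left dUZ
  have dYZ : Disjoint Y.leaves Z.leaves :=
    Finset.disjoint_of_subset_left Finset.subset_union_right dUZ
  have e1 : S0.leaves = V1.leaves := by
    simp only [hS0, hV1, leaves]
    exact Finset.union_right_comm _ _ _
  have e2 : S0.leaves = V2.leaves := by
    simp only [hS0, hV2, leaves]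
    ext a; simp; tauto
  have P1 : V1.Proper :=
    ⟨⟨PX, PZ, dXZ⟩, PY, by
      simp only [leaves, Finset.disjoint_union_left]
      exact ⟨dXY, dYZ.symm⟩⟩
  have P2 : V2.Proper :=
    ⟨⟨PZ, PY, dYZ.symm⟩, PX, by
      simp only [leaves, Finset.disjoint_union_left]
      exact ⟨dXZ.symm, dXY.symm⟩⟩
  have hPF1 : (K.fill V1).Proper := proper_fill_congr e1 P1 K hPS
  have hPF2 : (K.fill V2).Proper := proper_fill_congr e2 P2 K hPS
  have hLT : T.leaves = (K.fill S0).leaves := teq_leaves h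
  have hL1 : (K.fill V1).leaves = T.leaves := by rw [hLT]; exact (leaves_fill_congr e1 K).symm
  have hL2 : (K.fill V2).leaves = T.leaves := by rw [hLT]; exact (leaves_fill_congr e2 K).symm
  set N : ℕ := T.leaves.card with hN
  have hrevT : rev w T = mergeRevSum w N T := rev_eq_mRS w hsym T hT
  have hrev1 : rev w (K.fill V1) = mergeRevSum w N (K.fill V1) := by
    rw [rev_eq_mRS w hsym _ hPF1, hL1]
  have hrev2 : rev w (K.fill V2) = mergeRevSum w N (K.fill V2) := by
    rw [rev_eq_mRS w hsym _ hPF2, hL2]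
  have hTS : mergeRevSum w N T = mergeRevSum w N (K.fill S0) := mRS_teq w hsym N h
  have hop1 : rev w (K.fill V1) ≤ rev w T :=
    hopt (K.fill S0) (K.fill V1) h ⟨K, X, Y, Z, rfl, Or.inl rfl⟩
  have hop2 : rev w (K.fill V2) ≤ rev w T :=
    hopt (K.fill S0) (K.fill V2) h ⟨K, X, Y, Z, rfl, Or.inr rfl⟩
  have hsw1 := mRS_fill_swap w N e1 K
  have hsw2 := mRS_fill_swap w N e2 K
  have hm1 : mergeRevSum w N V1 ≤ mergeRevSum w N S0 := by
    rw [hrev1, hrevT, hTS] at hop1; linarith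
  have hm2 : mergeRevSum w N V2 ≤ mergeRevSum w N S0 := by
    rw [hrev2, hrevT, hTS] at hop2; linarith
  have hZY : wSet w Z.leaves Y.leaves = wSet w Y.leaves Z.leaves := wSet_comm w hsym _ _
  have hZX : wSet w Z.leaves X.leaves = wSet w X.leaves Z.leaves := wSet_comm w hsym _ _
  have hYX : wSet w Y.leaves X.leaves = wSet w X.leaves Y.leaves := wSet_comm w hsym _ _
  have hex0 : mergeRevSum w N S0 = mergeRevSum w N X + mergeRevSum w N Y + mergeRevSum w N Z
      + ((N : ℝ) - X.leaves.card - Y.leaves.card) * wSet w X.leaves Y.leaves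
      + ((N : ℝ) - X.leaves.card - Y.leaves.card - Z.leaves.card)
        * (wSet w X.leaves Z.leaves + wSet w Y.leaves Z.leaves) := by
    simp only [hS0, mergeRevSum, leaves, Finset.card_union_of_disjoint dXY,
      wSet_union_left w dXY]
    push_cast
    ring
  have hex1 : mergeRevSum w N V1 = mergeRevSum w N X + mergeRevSum w N Y + mergeRevSum w N Z
      + ((N : ℝ) - X.leaves.card - Z.leaves.card) * wSet w X.leaves Z.leaves
      + ((N : ℝ) - X.leaves.card - Z.leaves.card - Y.leaves.card)
        * (wSet w X.leaves Y.leaves + wSet w Y.leaves Z.leaves) := by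
    simp only [hV1, mergeRevSum, leaves, Finset.card_union_of_disjoint dXZ,
      wSet_union_left w dXZ, hZY]
    push_cast
    ring
  have hex2 : mergeRevSum w N V2 = mergeRevSum w N X + mergeRevSum w N Y + mergeRevSum w N Z
      + ((N : ℝ) - Z.leaves.card - Y.leaves.card) * wSet w Y.leaves Z.leaves
      + ((N : ℝ) - Z.leaves.card - Y.leaves.card - X.leaves.card)
        * (wSet w X.leaves Z.leaves + wSet w X.leaves Y.leaves) := by
    simp only [hV2, mergeRevSum, leaves, Finset.card_union_of_disjoint dYZ.symm,
      wSet_union_left w dYZ.symm, hZY, hZX, hYX]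
    push_cast
    ring
  constructor
  · rw [hex0, hex1] at hm1
    nlinarith [hm1]
  · rw [hex0, hex2] at hm2
    nlinarith [hm2]

theorem local_opt_pair [LinearOrder α] (w : α → α → ℝ) (hsym : ∀ i j, w i j = w j i)
    (T : HCTree α) (hT : T.Proper) (hopt : LocalOpt w T) :
    ∀ (X Y : HCTree α) (K : Ctx α), TEq T (K.fill (node X Y)) →
      ((X.leaves.card : ℝ) - 1) * wSet w X.leaves Y.leaves
        ≤ 2 * (Y.leaves.card : ℝ) * pairsSum w X.leaves := by
  intro X
  induction X with
  | leaf a =>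
    intro Y K h
    simp [leaves, pairsSum]
  | node X1 X2 ih1 ih2 =>
    intro Y K h
    have hPin : (node (node X1 X2) Y).Proper :=
      proper_fill_inner K (teq_proper h hT)
    obtain ⟨⟨P1, P2, d12⟩, PY, dUY⟩ := hPin
    obtain ⟨c1, c2⟩ := interchange_ineq w hsym T hT hopt K X1 X2 Y h
    have h1 : TEq T ((K.comp (Ctx.nodeL Ctx.hole Y)).fill (node X1 X2)) := by
      rw [fill_comp]; exact h
    have ihA := ih1 X2 (K.comp (Ctx.nodeL Ctx.hole Y)) h1
    have h2 : TEq T ((K.comp (Ctx.nodeL Ctx.hole Y)).fill (node X2 X1)) := by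
      rw [fill_comp]
      refine teq_trans h (teq_fill ?_ K)
      exact TEq.node (TEq.swap (teq_refl X1) (teq_refl X2)) (teq_refl Y)
    have ihB := ih2 X1 (K.comp (Ctx.nodeL Ctx.hole Y)) h2
    rw [wSet_comm w hsym] at ihB
    have hps : pairsSum w (node X1 X2).leaves
        = pairsSum w X1.leaves + pairsSum w X2.leaves + wSet w X1.leaves X2.leaves := by
      simp only [leaves]
      exact pairsSum_union w hsym d12
    have hcard : (((node X1 X2).leaves.card : ℝ))
        = (X1.leaves.card : ℝ) + (X2.leaves.card : ℝ) := by
      simp only [leaves, Finset.card_union_of_disjoint d12]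
      push_cast; ring
    have hwu : wSet w (node X1 X2).leaves Y.leaves
        = wSet w X1.leaves Y.leaves + wSet w X2.leaves Y.leaves := by
      simp only [leaves]
      exact wSet_union_left w d12 _
    have ha1 : (1 : ℝ) ≤ (X1.leaves.card : ℝ) := by
      exact_mod_cast Finset.card_pos.mpr (leaves_nonempty X1)
    have ha2 : (1 : ℝ) ≤ (X2.leaves.card : ℝ) := by
      exact_mod_cast Finset.card_pos.mpr (leaves_nonempty X2)
    have hb0 : (0 : ℝ) ≤ (Y.leaves.card : ℝ) := by positivity
    set a1 : ℝ := (X1.leaves.card : ℝ)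
    set a2 : ℝ := (X2.leaves.card : ℝ)
    set b : ℝ := (Y.leaves.card : ℝ)
    set p1 : ℝ := pairsSum w X1.leaves
    set p2 : ℝ := pairsSum w X2.leaves
    set q : ℝ := wSet w X1.leaves X2.leaves
    set r1 : ℝ := wSet w X1.leaves Y.leaves
    set r2 : ℝ := wSet w X2.leaves Y.leaves
    -- from ihA : (a1 - 1) * q ≤ 2 * a2 * p1 ; c1 : a2 * r1 ≤ b * q
    have k1 : (a1 - 1) * r1 * a2 ≤ 2 * b * p1 * a2 := by
      calc (a1 - 1) * r1 * a2 = (a1 - 1) * (a2 * r1) := by ring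
        _ ≤ (a1 - 1) * (b * q) :=
            mul_le_mul_of_nonneg_left c1 (by linarith)
        _ = b * ((a1 - 1) * q) := by ring
        _ ≤ b * (2 * a2 * p1) := mul_le_mul_of_nonneg_left ihA hb0
        _ = 2 * b * p1 * a2 := by ring
    have k2 : (a2 - 1) * r2 * a1 ≤ 2 * b * p2 * a1 := by
      calc (a2 - 1) * r2 * a1 = (a2 - 1) * (a1 * r2) := by ring
        _ ≤ (a2 - 1) * (b * q) :=
            mul_le_mul_of_nonneg_left c2 (by linarith)
        _ = b * ((a2 - 1) * q) := by ring
        _ ≤ b * (2 * a1 * p2) := mul_le_mul_of_nonneg_left ihB hb0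
        _ = 2 * b * p2 * a1 := by ring
    have k1' : (a1 - 1) * r1 ≤ 2 * b * p1 :=
      (mul_le_mul_iff_of_pos_right (by linarith : (0:ℝ) < a2)).mp k1
    have k2' : (a2 - 1) * r2 ≤ 2 * b * p2 :=
      (mul_le_mul_iff_of_pos_right (by linarith : (0:ℝ) < a1)).mp k2
    rw [hps, hcard, hwu]
    nlinarith [k1', k2', c1, c2]

end HCTree
open HCTree in
/-- in a locally optimal tree whose root children have leaf sets
`A`, `B`: `2|B|·s(A) ≥ (|A|-1)·w(A,B)`, `2|A|·s(B) ≥ (|B|-1)·w(A,B)`, and hence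
`2(|B|·s(A) + |A|·s(B)) + 2·w(A,B) ≥ (|A|+|B|)·w(A,B)`. -/
theorem locally_optimal_root_ineq {n : ℕ} (w : Fin n → Fin n → ℝ)
    (hsym : ∀ i j, w i j = w j i) (hnonneg : ∀ i j, 0 ≤ w i j)
    (TA TB : HCTree (Fin n)) (hproper : (HCTree.node TA TB).Proper)
    (horder : (HCTree.node TA TB).leaves = Finset.univ)
    (hopt : (HCTree.node TA TB).LocalOpt w) :
    2 * (TB.leaves.card : ℝ) * pairsSum w TA.leaves ≥
        ((TA.leaves.card : ℝ) - 1) * wSet w TA.leaves TB.leaves ∧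
    2 * (TA.leaves.card : ℝ) * pairsSum w TB.leaves ≥
        ((TB.leaves.card : ℝ) - 1) * wSet w TA.leaves TB.leaves ∧
    2 * ((TB.leaves.card : ℝ) * pairsSum w TA.leaves
          + (TA.leaves.card : ℝ) * pairsSum w TB.leaves)
        + 2 * wSet w TA.leaves TB.leaves ≥
      ((TA.leaves.card : ℝ) + (TB.leaves.card : ℝ)) * wSet w TA.leaves TB.leaves := by
  have first := local_opt_pair w hsym (HCTree.node TA TB) hproper hopt TA TB Ctx.hole
      (teq_refl _)
  have second := local_opt_pair w hsym (HCTree.node TA TB) hproper hopt TB TA Ctx.hole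
      (TEq.swap (teq_refl TA) (teq_refl TB))
  rw [wSet_comm w hsym TB.leaves TA.leaves] at second
  exact ⟨first, second, by linarith⟩
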